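/- For positive integers k and p, let G be a k-degenerate ordered graph with n vertices and let K_n(p) be the ordered complete p-partite graph with p consecutive intervals of n vertices each. Then OR(G, K_n(p)) ≤ n^{(1+2/k)(k+1)^{⌈log p⌉} − 2/k}. In particular, every k-degenerate ordered graph G with n vertices and interval chromatic number p satisfies OR(G; 2) ≤ n^{(1+2/k)(k+1)^{⌈log p⌉} − 2/k}. -/

import Mathlib

/-- A copy of the ordered graph `G` in color `col` in the `Bool`-colored ordered
complete graph on `Fin N`. -/
def hasOrdCopyB {r N : ℕ} (G : SimpleGraph (Fin r)) (f : Fin N → Fin N → Bool) (col : Bool) :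
    Prop :=
  ∃ g : Fin r → Fin N, StrictMono g ∧ ∀ a b : Fin r, a < b → G.Adj a b → f (g a) (g b) = col

/-- `N` satisfies the two-color ordered Ramsey property for `(G, H)`: every
red/blue coloring of the ordered complete graph on `N` vertices contains a red
(`true`) ordered copy of `G` or a blue (`false`) ordered copy of `H`. -/
def ordRamsey2Prop {r s : ℕ} (G : SimpleGraph (Fin r)) (H : SimpleGraph (Fin s)) (N : ℕ) :
    Prop :=
  ∀ f : Fin N → Fin N → Bool, hasOrdCopyB G f true ∨ hasOrdCopyB H f false
/-- An ordered graph on `Fin n` is `k`-degenerate if there is an ordering of the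
vertices (possibly different from the vertex ordering) in which every vertex has
at most `k` earlier neighbors. -/
def IsKDegenerate (k n : ℕ) (G : SimpleGraph (Fin n)) : Prop :=
  ∃ π : Fin n ≃ Fin n, ∀ v : Fin n, {u | G.Adj u v ∧ π u < π v}.ncard ≤ k

/-- The ordered complete `p`-partite graph `K_n(p)` whose `p` color classes are
`p` consecutive intervals of `n` vertices each. -/
def multipartiteIntervals (p n : ℕ) : SimpleGraph (Fin (p * n)) :=
  SimpleGraph.fromRel (fun a b => a.val / n ≠ b.val / n)

/-!
By induction on `j`, `OR(K_n(2^j), G) ≤ n^{e_j}` for `e_0 = 1`, `e_{j+1} = (k+1) e_j + 2`; this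
`e_j` is the exponent of the statement at `j = ⌈log p⌉`. For the step, let `M = n^{e_j}` and cut
the first `n² M^{k+1}` vertices into `n` consecutive blocks of `n M^{k+1}` vertices, one for each
vertex of `G`. Without a red `K_n(2^{j+1})` and a blue `G`, the blue graph is dense between any two
blocks: among any `M` vertices of one block some vertex has `s` blue neighbours in any `s M`
vertices of the other. Otherwise a red `K_n(2^j)` among the `M` vertices leaves at least `M`
vertices of the other block red to all of it; these contain a second red `K_n(2^j)`, and the two
form a red `K_n(2^{j+1})`. Density lets us embed `G` greedily in a degeneracy order, vertex `v`
into block `v`, keeping for each vertex with `c` embedded neighbours `n M^{k+1-c}` candidates blue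
to all of them. This is a blue `G`, a contradiction.
-/

open Finset

section OrderedCopies

variable {r r' N N' : ℕ}

def IsOrdCopy (G : SimpleGraph (Fin r)) (f : Fin N → Fin N → Bool) (col : Bool)
    (g : Fin r → Fin N) : Prop :=
  StrictMono g ∧ ∀ a b : Fin r, a < b → G.Adj a b → f (g a) (g b) = col

theorem hasOrdCopyB.of_orderEmbedding {G : SimpleGraph (Fin r)} {G' : SimpleGraph (Fin r')}
    {f : Fin N → Fin N → Bool} {col : Bool} (e : Fin r ↪o Fin r')
    (he : ∀ a b, G.Adj a b → G'.Adj (e a) (e b)) (h : hasOrdCopyB G' f col) :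
    hasOrdCopyB G f col := by
  obtain ⟨g, hg, hcol⟩ := h
  exact ⟨g ∘ e, hg.comp e.strictMono,
    fun a b hab hadj => hcol _ _ (e.lt_iff_lt.2 hab) (he a b hadj)⟩

theorem hasOrdCopyB.of_comp {G : SimpleGraph (Fin r)} {f : Fin N' → Fin N' → Bool} {col : Bool}
    (e : Fin N ↪o Fin N') (h : hasOrdCopyB G (fun i j => f (e i) (e j)) col) :
    hasOrdCopyB G f col := by
  obtain ⟨g, hg, hcol⟩ := h
  exact ⟨e ∘ g, e.strictMono.comp hg, hcol⟩

theorem hasOrdCopyB_of_forall_not_adj {G : SimpleGraph (Fin r)}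
    (hG : ∀ a b, a < b → ¬ G.Adj a b) (hr : r ≤ N) (f : Fin N → Fin N → Bool) (col : Bool) :
    hasOrdCopyB G f col :=
  ⟨Fin.castLE hr, Fin.strictMono_castLE hr, fun a b hab hadj => (hG a b hab hadj).elim⟩

theorem ordRamsey2Prop.mono {G : SimpleGraph (Fin r)} {H : SimpleGraph (Fin r')}
    (h : ordRamsey2Prop G H N) (hN : N ≤ N') : ordRamsey2Prop G H N' := fun _ =>
  (h _).imp (hasOrdCopyB.of_comp (Fin.castLEOrderEmb hN))
    (hasOrdCopyB.of_comp (Fin.castLEOrderEmb hN))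

theorem ordRamsey2Prop.of_orderEmbedding {r'' : ℕ} {G : SimpleGraph (Fin r)}
    {G' : SimpleGraph (Fin r'')} {H : SimpleGraph (Fin r')} (h : ordRamsey2Prop G' H N)
    (e : Fin r ↪o Fin r'') (he : ∀ a b, G.Adj a b → G'.Adj (e a) (e b)) :
    ordRamsey2Prop G H N := fun f =>
  (h f).imp_left (hasOrdCopyB.of_orderEmbedding e he)

theorem exists_isOrdCopy_subset {G : SimpleGraph (Fin r)} {H : SimpleGraph (Fin r')} {M : ℕ}
    (hR : ordRamsey2Prop G H M) {f : Fin N → Fin N → Bool} (hH : ¬ hasOrdCopyB H f false)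
    {S : Finset (Fin N)} (hS : M ≤ #S) : ∃ g, IsOrdCopy G f true g ∧ ∀ i, g i ∈ S := by
  let e := S.orderEmbOfFin rfl
  obtain ⟨g, hg⟩ | hblue := hR.mono hS fun i j => f (e i) (e j)
  · exact ⟨e ∘ g, ⟨e.strictMono.comp hg.1, hg.2⟩, fun i => S.orderEmbOfFin_mem rfl _⟩
  · exact (hH (hblue.of_comp e)).elim

end OrderedCopies

theorem multipartiteIntervals_adj {p n : ℕ} {a b : Fin (p * n)} :
    (multipartiteIntervals p n).Adj a b ↔ (a : ℕ) / n ≠ b / n := by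
  rw [multipartiteIntervals, SimpleGraph.fromRel_adj]
  constructor
  · rintro ⟨-, h | h⟩
    exacts [h, Ne.symm h]
  · intro h
    exact ⟨fun hab => h (hab ▸ rfl), Or.inl h⟩

theorem multipartiteIntervals_adj_castLE {p p' n : ℕ} (h : p * n ≤ p' * n) (a b : Fin (p * n))
    (hab : (multipartiteIntervals p n).Adj a b) :
    (multipartiteIntervals p' n).Adj (Fin.castLE h a) (Fin.castLE h b) := by
  simpa [multipartiteIntervals_adj] using hab

theorem exists_orderEmbedding_multipartiteIntervals {n p : ℕ} {H : SimpleGraph (Fin n)}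
    {ic : Fin n → Fin p} (hic : Monotone ic) (hadj : ∀ a b, H.Adj a b → ic a ≠ ic b) :
    ∃ e : Fin n ↪o Fin (p * n), ∀ a b, H.Adj a b → (multipartiteIntervals p n).Adj (e a) (e b) := by
  have hlt : ∀ {i j : ℕ} (a b : Fin n), i < j → i * n + a < j * n + b := fun {i j} a b hij => by
    have := Nat.mul_le_mul_right n (Nat.succ_le_of_lt hij)
    rw [Nat.succ_mul] at this
    omega
  let e (a : Fin n) : Fin (p * n) :=
    ⟨ic a * n + a, (hlt a ⟨0, a.pos⟩ (ic a).isLt).trans_le (by simp)⟩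
  have he : StrictMono e := fun a b hab => by
    rcases (hic hab.le).lt_or_eq with h | h
    · exact hlt a b h
    · exact Fin.lt_def.2 (by simp only [e, h]; exact Nat.add_lt_add_left hab _)
  have hdiv : ∀ a, (e a : ℕ) / n = ic a := fun a => by
    simp only [e]
    rw [mul_comm, Nat.mul_add_div a.pos, Nat.div_eq_of_lt a.isLt, add_zero]
  refine ⟨OrderEmbedding.ofStrictMono e he, fun a b hab => ?_⟩
  simpa [multipartiteIntervals_adj, hdiv, Fin.val_inj] using hadj a b hab

theorem hasOrdCopyB_multipartiteIntervals_add {p₁ p₂ n N : ℕ} {f : Fin N → Fin N → Bool}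
    {g₁ : Fin (p₁ * n) → Fin N} {g₂ : Fin (p₂ * n) → Fin N}
    (h₁ : IsOrdCopy (multipartiteIntervals p₁ n) f true g₁)
    (h₂ : IsOrdCopy (multipartiteIntervals p₂ n) f true g₂)
    (hlt : ∀ i j, g₁ i < g₂ j) (hcross : ∀ i j, f (g₁ i) (g₂ j) = true) :
    hasOrdCopyB (multipartiteIntervals (p₁ + p₂) n) f true := by
  have shift : ∀ i : Fin (p₂ * n), (p₁ * n + i) / n = p₁ + i / n := fun i => by
    have hn : 0 < n := Nat.pos_of_mul_pos_left (Nat.zero_lt_of_lt i.isLt)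
    rw [mul_comm, Nat.mul_add_div hn]
  have mono : StrictMono (Fin.append g₁ g₂) := by
    intro a b hab
    induction a using Fin.addCases <;> induction b using Fin.addCases <;>
      simp only [Fin.append_left, Fin.append_right] at hab ⊢
    · exact h₁.1 ((Fin.strictMono_castAdd _).lt_iff_lt.1 hab)
    · exact hlt _ _
    · simp [Fin.lt_def] at hab; omega
    · exact h₂.1 (by simpa using hab)
  have red : ∀ a b : Fin (p₁ * n + p₂ * n), a < b → (a : ℕ) / n ≠ b / n →
      f (Fin.append g₁ g₂ a) (Fin.append g₁ g₂ b) = true := by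
    intro a b hab hadj
    induction a using Fin.addCases <;> induction b using Fin.addCases <;>
      simp only [Fin.append_left, Fin.append_right] at hab ⊢
    · exact h₁.2 _ _ ((Fin.strictMono_castAdd _).lt_iff_lt.1 hab)
        (multipartiteIntervals_adj.2 (by simpa using hadj))
    · exact hcross _ _
    · simp [Fin.lt_def] at hab; omega
    · refine h₂.2 _ _ (by simpa using hab) (multipartiteIntervals_adj.2 ?_)
      simpa [shift] using hadj
  exact ⟨Fin.append g₁ g₂ ∘ Fin.cast (add_mul p₁ p₂ n), mono.comp (Fin.cast_strictMono _),
    fun a b hab hadj => red _ _ hab (multipartiteIntervals_adj.1 hadj)⟩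

section Counting

variable {ι X : Type*}

theorem le_card_sdiff_biUnion [DecidableEq X] {I : Finset ι} {A : ι → Finset X} {T : Finset X}
    {s c : ℕ}
    (hs : 0 < s) (hA : ∀ i ∈ I, #(A i) < s) (hI : #I ≤ c) (hT : s * c ≤ #T) :
    c ≤ #(T \ I.biUnion A) := by
  have hU : #(I.biUnion A) ≤ c * (s - 1) := calc
    #(I.biUnion A) ≤ ∑ i ∈ I, #(A i) := card_biUnion_le
    _ ≤ ∑ _i ∈ I, (s - 1) := sum_le_sum fun i hi => Nat.le_sub_one_of_lt (hA i hi)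
    _ = #I * (s - 1) := by rw [sum_const, smul_eq_mul]
    _ ≤ c * (s - 1) := Nat.mul_le_mul_right _ hI
  have hsc : s * c = c * (s - 1) + c := by
    obtain ⟨s, rfl⟩ := Nat.exists_eq_add_of_lt hs
    simp only [zero_add, Nat.add_sub_cancel]
    ring
  have := card_le_card_sdiff_add_card (s := T) (t := I.biUnion A)
  omega

def RelDense (B : X → X → Prop) [DecidableRel B] (M : ℕ) (S T : Finset X) : Prop :=
  ∀ S' ⊆ S, ∀ T' ⊆ T, ∀ s, M ≤ #S' → s * M ≤ #T' → ∃ x ∈ S', s ≤ #{y ∈ T' | B x y}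

theorem RelDense.mono {B : X → X → Prop} [DecidableRel B] {M : ℕ} {S T S' T' : Finset X}
    (h : RelDense B M S T) (hS : S' ⊆ S) (hT : T' ⊆ T) : RelDense B M S' T' :=
  fun S'' hS'' T'' hT'' => h S'' (hS''.trans hS) T'' (hT''.trans hT)

theorem RelDense.exists_forall_le_card_filter [DecidableEq X] {B : X → X → Prop}
    [DecidableRel B] {M : ℕ} (hM : 0 < M) {S : Finset X} {I : Finset ι} {T : ι → Finset X}
    {s : ι → ℕ}
    (hdense : ∀ i ∈ I, RelDense B M S (T i)) (hT : ∀ i ∈ I, s i * M ≤ #(T i))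
    (hS : M * (#I + 1) ≤ #S) : ∃ x ∈ S, ∀ i ∈ I, s i ≤ #{y ∈ T i | B x y} := by
  let bad i := {x ∈ S | #{y ∈ T i | B x y} < s i}
  have hbad : ∀ i ∈ I, #(bad i) < M := fun i hi => by
    by_contra! h
    obtain ⟨x, hx, hxs⟩ :=
      hdense i hi (bad i) (filter_subset _ _) (T i) subset_rfl (s i) h (hT i hi)
    exact (mem_filter.1 hx).2.not_ge hxs
  obtain ⟨x, hx⟩ : (S \ I.biUnion bad).Nonempty :=
    card_pos.1 <| (Nat.succ_pos _).trans_le <| le_card_sdiff_biUnion hM hbad (Nat.le_succ _) hS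
  simp only [mem_sdiff, mem_biUnion, not_exists, not_and] at hx
  exact ⟨x, hx.1, fun i hi => not_lt.1 fun h => hx.2 i hi (mem_filter.2 ⟨hx.1, h⟩)⟩

end Counting

theorem ncard_lt_adj_succ {n : ℕ} (G : SimpleGraph (Fin (n + 1))) [DecidableRel G.Adj]
    (j : Fin n) :
    {u | u < j.succ ∧ G.Adj u j.succ}.ncard =
      {u | u < j ∧ (G.comap Fin.succ).Adj u j}.ncard + if G.Adj 0 j.succ then 1 else 0 := by
  simp only [Set.ncard_eq_toFinset_card', Set.toFinset_ofPred, card_filter, Fin.sum_univ_succ,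
    SimpleGraph.comap_adj, Fin.succ_lt_succ_iff, Fin.succ_pos, true_and]
  ring

-- `x₀` has `m * M ^ r w` `B`-neighbours in `D w` for every later neighbour `w` of `0` (by density,
-- fewer than `M` points of `D 0` fail this for a given `w`), and `w` keeps just those.
theorem exists_relDense_step {X : Type*} [DecidableEq X] {B : X → X → Prop} [DecidableRel B]
    {M m n : ℕ} (hM : 0 < M) (hnm : n + 1 ≤ m) (G : SimpleGraph (Fin (n + 1)))
    (r : Fin (n + 1) → ℕ) (hr : ∀ v, {u | u < v ∧ G.Adj u v}.ncard ≤ r v)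
    (D : Fin (n + 1) → Finset X) (hD : ∀ v, m * M ^ (r v + 1) ≤ #(D v))
    (hdense : ∀ j : Fin n, RelDense B M (D 0) (D j.succ)) :
    ∃ x₀ ∈ D 0, ∃ (D' : Fin n → Finset X) (r' : Fin n → ℕ), (∀ j, D' j ⊆ D j.succ) ∧
      (∀ j, G.Adj 0 j.succ → ∀ y ∈ D' j, B x₀ y) ∧
      (∀ j, {u | u < j ∧ (G.comap Fin.succ).Adj u j}.ncard ≤ r' j) ∧
      ∀ j, m * M ^ (r' j + 1) ≤ #(D' j) := by
  classical
  have hI : M * (#{j : Fin n | G.Adj 0 j.succ} + 1) ≤ #(D 0) := calc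
    _ ≤ M * m := by
      have := card_le_univ {j : Fin n | G.Adj 0 j.succ}
      rw [Fintype.card_fin] at this
      exact Nat.mul_le_mul_left M (by omega)
    _ ≤ m * M ^ (r 0 + 1) := by
      rw [mul_comm]; exact Nat.mul_le_mul_left m (Nat.le_self_pow (by omega) M)
    _ ≤ #(D 0) := hD 0
  obtain ⟨x₀, hx₀, hgood⟩ := RelDense.exists_forall_le_card_filter hM
    (T := fun j => D j.succ) (s := fun j => m * M ^ r j.succ) (fun j _ => hdense j)
    (fun j _ => by simpa [pow_succ, mul_assoc] using hD j.succ) hI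
  refine ⟨x₀, hx₀, fun j => if G.Adj 0 j.succ then {y ∈ D j.succ | B x₀ y} else D j.succ,
    fun j => r j.succ - if G.Adj 0 j.succ then 1 else 0, fun j => ?_, fun j h y hy => ?_,
    fun j => ?_, fun j => ?_⟩
  · dsimp only
    split_ifs
    exacts [filter_subset _ _, subset_rfl]
  · simp only [h, if_true, mem_filter] at hy
    exact hy.2
  · have := ncard_lt_adj_succ G j
    have := hr j.succ
    dsimp only
    omega
  · have hcount := ncard_lt_adj_succ G j
    have := hr j.succ
    by_cases h : G.Adj 0 j.succ
    · rw [if_pos h] at hcount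
      have hrj : r j.succ - 1 + 1 = r j.succ := by omega
      simpa [h, hrj] using hgood j (by simpa using h)
    · simpa [h] using hD j.succ

theorem exists_embedding_of_relDense {X : Type*} [DecidableEq X] {B : X → X → Prop}
    [DecidableRel B] (hB : ∀ x y, B x y → B y x) {M m : ℕ} (hM : 0 < M) (n : ℕ) (hnm : n ≤ m)
    (G : SimpleGraph (Fin n)) (r : Fin n → ℕ) (hr : ∀ v, {u | u < v ∧ G.Adj u v}.ncard ≤ r v)
    (D : Fin n → Finset X) (hD : ∀ v, m * M ^ (r v + 1) ≤ #(D v))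
    (hdense : ∀ v w, v ≠ w → RelDense B M (D v) (D w)) :
    ∃ x : Fin n → X, (∀ v, x v ∈ D v) ∧ ∀ u v, G.Adj u v → B (x u) (x v) := by
  induction n with
  | zero => exact ⟨Fin.elim0, fun v => v.elim0, fun u => u.elim0⟩
  | succ n ih =>
    obtain ⟨x₀, hx₀, D', r', hD', hx₀B, hr', hD'card⟩ := exists_relDense_step hM hnm G r hr D hD
      fun j => hdense 0 j.succ (Fin.succ_ne_zero j).symm
    obtain ⟨x, hxD, hxB⟩ := ih (by omega) _ r' hr' D' hD'card
      fun v w hvw => (hdense v.succ w.succ (by simpa using hvw)).mono (hD' v) (hD' w)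
    refine ⟨Fin.cons x₀ x, Fin.cases (by simpa using hx₀) fun j => by simpa using hD' j (hxD j), ?_⟩
    intro u v huv
    induction u using Fin.cases <;> induction v using Fin.cases
    · exact (G.irrefl huv).elim
    · simpa using hx₀B _ huv _ (hxD _)
    · simpa using hB _ _ (hx₀B _ huv.symm _ (hxD _))
    · simpa using hxB _ _ huv

section Coloring

variable {N : ℕ}

/-- `f` colours the edge `{x, y}` with `x < y` by `f x y`. -/
def blueAdj (f : Fin N → Fin N → Bool) (x y : Fin N) : Prop :=
  f (min x y) (max x y) = false

instance (f : Fin N → Fin N → Bool) : DecidableRel (blueAdj f) := fun _ _ =>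
  inferInstanceAs (Decidable (_ = _))

theorem blueAdj_comm {f : Fin N → Fin N → Bool} {x y : Fin N} :
    blueAdj f x y ↔ blueAdj f y x := by
  rw [blueAdj, blueAdj, min_comm, max_comm]

theorem blueAdj_of_lt {f : Fin N → Fin N → Bool} {x y : Fin N} (h : x < y) :
    blueAdj f x y ↔ f x y = false := by
  rw [blueAdj, min_eq_left h.le, max_eq_right h.le]

theorem hasOrdCopyB_multipartiteIntervals_add_self_of_not_blueAdj {q n : ℕ}
    {f : Fin N → Fin N → Bool} {g₁ g₂ : Fin (q * n) → Fin N}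
    (h₁ : IsOrdCopy (multipartiteIntervals q n) f true g₁)
    (h₂ : IsOrdCopy (multipartiteIntervals q n) f true g₂)
    (hlt : (∀ i j, g₁ i < g₂ j) ∨ ∀ i j, g₂ j < g₁ i) (hred : ∀ i j, ¬ blueAdj f (g₁ i) (g₂ j)) :
    hasOrdCopyB (multipartiteIntervals (q + q) n) f true := by
  rcases hlt with hlt | hlt
  · refine hasOrdCopyB_multipartiteIntervals_add h₁ h₂ hlt fun i j => ?_
    simpa [blueAdj_of_lt (hlt i j)] using hred i j
  · refine hasOrdCopyB_multipartiteIntervals_add h₂ h₁ (fun j i => hlt i j) fun j i => ?_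
    simpa [blueAdj_of_lt (hlt i j)] using mt blueAdj_comm.1 (hred i j)

theorem relDense_blueAdj {n q M : ℕ} {G : SimpleGraph (Fin n)} {f : Fin N → Fin N → Bool}
    (hQ : ordRamsey2Prop (multipartiteIntervals q n) G M) (hM : 0 < M) (hqM : q * n ≤ M)
    (hG : ¬ hasOrdCopyB G f false) (hK : ¬ hasOrdCopyB (multipartiteIntervals (q + q) n) f true)
    {S T : Finset (Fin N)} (hST : (∀ x ∈ S, ∀ y ∈ T, x < y) ∨ ∀ x ∈ S, ∀ y ∈ T, y < x) :
    RelDense (blueAdj f) M S T := by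
  intro S' hS' T' hT' s hMS hsT
  by_contra! hsparse
  obtain ⟨g₁, hg₁, hg₁S⟩ := exists_isOrdCopy_subset hQ hG hMS
  obtain ⟨x, hx⟩ := card_pos.1 (hM.trans_le hMS)
  have hs : 0 < s := (Nat.zero_le _).trans_lt (hsparse x hx)
  obtain ⟨g₂, hg₂, hg₂T⟩ := exists_isOrdCopy_subset hQ hG
    (le_card_sdiff_biUnion (I := univ) (A := fun i => {y ∈ T' | blueAdj f (g₁ i) y}) hs
      (fun i _ => hsparse _ (hg₁S i)) (by simpa using hqM) hsT)
  simp only [mem_sdiff, mem_biUnion, mem_univ, mem_filter, true_and, not_exists, not_and] at hg₂T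
  refine hK (hasOrdCopyB_multipartiteIntervals_add_self_of_not_blueAdj hg₁ hg₂ ?_
    fun i j => (hg₂T j).2 i (hg₂T j).1)
  exact hST.imp (fun h i j => h _ (hS' (hg₁S i)) _ (hT' (hg₂T j).1))
    (fun h i j => h _ (hS' (hg₁S i)) _ (hT' (hg₂T j).1))

end Coloring

theorem exists_consecutive_blocks {n L N : ℕ} (h : n * L ≤ N) :
    ∃ W : Fin n → Finset (Fin N), (∀ a, #(W a) = L) ∧
      ∀ a b, a < b → ∀ x ∈ W a, ∀ y ∈ W b, x < y := by
  let e (a : Fin n) : Fin L ↪ Fin N :=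
    ⟨fun i => Fin.castLE h (finProdFinEquiv (a, i)), fun i j hij => by simpa using hij⟩
  refine ⟨fun a => univ.map (e a), fun a => by simp, fun a b hab x hx y hy => ?_⟩
  obtain ⟨i, -, rfl⟩ := mem_map.1 hx
  obtain ⟨j, -, rfl⟩ := mem_map.1 hy
  have := Nat.mul_le_mul_left L (Nat.succ_le_of_lt hab)
  change (i : ℕ) + L * a < j + L * b
  rw [Nat.mul_succ] at this
  omega

theorem IsKDegenerate.exists_comap {k n : ℕ} {G : SimpleGraph (Fin n)}
    (hG : IsKDegenerate k n G) :
    ∃ π : Fin n ≃ Fin n, ∀ i, {u | u < i ∧ (G.comap π.symm).Adj u i}.ncard ≤ k := by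
  obtain ⟨π, hπ⟩ := hG
  refine ⟨π, fun i => ?_⟩
  have : {u | u < i ∧ (G.comap π.symm).Adj u i} =
      π '' {u | G.Adj u (π.symm i) ∧ π u < π (π.symm i)} := by
    rw [Equiv.image_eq_preimage_symm]
    ext u
    simp [and_comm]
  rw [this, Set.ncard_image_of_injective _ π.injective]
  exact hπ _

theorem hasOrdCopyB_false_of_relDense_blocks {k n M N : ℕ} {G : SimpleGraph (Fin n)}
    (hG : IsKDegenerate k n G) (hM : 0 < M) {f : Fin N → Fin N → Bool}
    {W : Fin n → Finset (Fin N)} (hW : ∀ a, n * M ^ (k + 1) ≤ #(W a))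
    (hlt : ∀ a b, a < b → ∀ x ∈ W a, ∀ y ∈ W b, x < y)
    (hdense : ∀ a b, a ≠ b → RelDense (blueAdj f) M (W a) (W b)) :
    hasOrdCopyB G f false := by
  obtain ⟨π, hπ⟩ := hG.exists_comap
  obtain ⟨x, hxW, hxB⟩ := exists_embedding_of_relDense (fun _ _ => blueAdj_comm.1) hM n le_rfl
    (G.comap π.symm) (fun _ => k) hπ (W ∘ π.symm) (fun _ => hW _)
    (fun v w hvw => hdense _ _ (π.symm.injective.ne hvw))
  have hmem : ∀ a, x (π a) ∈ W a := fun a => by simpa using hxW (π a)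
  have hmono : StrictMono (x ∘ π) := fun a b hab => hlt a b hab _ (hmem a) _ (hmem b)
  exact ⟨x ∘ π, hmono, fun a b hab hadj =>
    (blueAdj_of_lt (hmono hab)).1 (hxB _ _ (by simpa using hadj))⟩

theorem ordRamsey2Prop_multipartiteIntervals_add_self {k n q M : ℕ} {G : SimpleGraph (Fin n)}
    (hG : IsKDegenerate k n G) (hM : 0 < M) (hqM : q * n ≤ M)
    (hQ : ordRamsey2Prop (multipartiteIntervals q n) G M) :
    ordRamsey2Prop (multipartiteIntervals (q + q) n) G (n ^ 2 * M ^ (k + 1)) := by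
  intro f
  by_contra! h
  obtain ⟨hK, hGf⟩ := h
  obtain ⟨W, hWcard, hWlt⟩ :=
    exists_consecutive_blocks (N := n ^ 2 * M ^ (k + 1)) (L := n * M ^ (k + 1)) (by ring_nf; rfl)
  refine hGf (hasOrdCopyB_false_of_relDense_blocks hG hM (fun a => (hWcard a).ge) hWlt
    fun a b hab => relDense_blueAdj hQ hM hqM hGf hK ?_)
  rcases hab.lt_or_gt with h | h
  · exact .inl (hWlt a b h)
  · exact .inr fun x hx y hy => hWlt b a h y hy x hx

def ramseyExponent (k : ℕ) : ℕ → ℕ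
  | 0 => 1
  | j + 1 => (k + 1) * ramseyExponent k j + 2

theorem mul_ramseyExponent_add_two (k j : ℕ) :
    k * ramseyExponent k j + 2 = (k + 2) * (k + 1) ^ j := by
  induction j with
  | zero => simp [ramseyExponent]
  | succ j ih => calc
      k * ((k + 1) * ramseyExponent k j + 2) + 2 = (k + 1) * (k * ramseyExponent k j + 2) := by
        ring
      _ = (k + 2) * (k + 1) ^ (j + 1) := by rw [ih]; ring

theorem succ_le_ramseyExponent (k j : ℕ) : j + 1 ≤ ramseyExponent k j := by
  induction j with
  | zero => simp [ramseyExponent]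
  | succ j ih =>
    have : ramseyExponent k j ≤ (k + 1) * ramseyExponent k j := Nat.le_mul_of_pos_left _ (by omega)
    rw [ramseyExponent]
    omega

theorem ramseyExponent_eq {k : ℕ} (hk : 0 < k) (j : ℕ) :
    (1 + 2 / (k : ℝ)) * ((k : ℝ) + 1) ^ j - 2 / (k : ℝ) = ramseyExponent k j := by
  have h : (k : ℝ) * ramseyExponent k j + 2 = (k + 2) * (k + 1) ^ j := by
    exact_mod_cast mul_ramseyExponent_add_two k j
  field_simp
  linear_combination -h

theorem ordRamsey2Prop_multipartiteIntervals_two_pow {k n : ℕ} {G : SimpleGraph (Fin n)}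
    (hG : IsKDegenerate k n G) (hn : 2 ≤ n) (j : ℕ) :
    ordRamsey2Prop (multipartiteIntervals (2 ^ j) n) G (n ^ ramseyExponent k j) := by
  induction j with
  | zero =>
    refine fun f => .inl (hasOrdCopyB_of_forall_not_adj (fun a b _ hadj => ?_)
      (by simp [ramseyExponent]) f true)
    have ha : (a : ℕ) < n := by simpa using a.isLt
    have hb : (b : ℕ) < n := by simpa using b.isLt
    exact multipartiteIntervals_adj.1 hadj (by rw [Nat.div_eq_of_lt ha, Nat.div_eq_of_lt hb])
  | succ j ih =>
    have hqM : 2 ^ j * n ≤ n ^ ramseyExponent k j := calc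
      2 ^ j * n ≤ n ^ j * n := Nat.mul_le_mul_right n (Nat.pow_le_pow_left hn j)
      _ = n ^ (j + 1) := (pow_succ n j).symm
      _ ≤ n ^ ramseyExponent k j := Nat.pow_le_pow_right (by omega) (succ_le_ramseyExponent k j)
    have hexp : n ^ ramseyExponent k (j + 1) = n ^ 2 * (n ^ ramseyExponent k j) ^ (k + 1) := by
      rw [← pow_mul, ← pow_add, ramseyExponent]; ring_nf
    rw [pow_succ, mul_two, hexp]
    exact ordRamsey2Prop_multipartiteIntervals_add_self hG (by positivity) hqM ih

theorem ordRamsey2Prop_multipartiteIntervals_of_isKDegenerate {k p n N : ℕ}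
    {G : SimpleGraph (Fin n)} (hk : 0 < k) (hG : IsKDegenerate k n G)
    (hN : (n : ℝ) ^ ((1 + 2 / (k : ℝ)) * ((k : ℝ) + 1) ^ (Nat.clog 2 p) - 2 / (k : ℝ)) ≤ N) :
    ordRamsey2Prop (multipartiteIntervals p n) G N := by
  rw [ramseyExponent_eq hk, Real.rpow_natCast] at hN
  have hE : n ^ ramseyExponent k (Nat.clog 2 p) ≤ N := by exact_mod_cast hN
  rcases lt_or_ge n 2 with hn | hn
  · have hE0 : ramseyExponent k (Nat.clog 2 p) ≠ 0 := by
      have := succ_le_ramseyExponent k (Nat.clog 2 p); omega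
    have hnN := (Nat.le_self_pow hE0 n).trans hE
    exact fun f => .inr (hasOrdCopyB_of_forall_not_adj (fun a b hab => by omega) hnN f false)
  · have hp := Nat.mul_le_mul_right n (Nat.le_pow_clog one_lt_two p)
    exact ((ordRamsey2Prop_multipartiteIntervals_two_pow hG hn _).mono hE).of_orderEmbedding
      (Fin.castLEOrderEmb hp) (multipartiteIntervals_adj_castLE hp)

theorem ordered_ramsey_degenerate_vs_multipartite_general (k p n : ℕ) (hk : 0 < k)
    (G : SimpleGraph (Fin n)) (hdeg : IsKDegenerate k n G) :
    (∀ N : ℕ,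
      (n : ℝ) ^ ((1 + 2 / (k : ℝ)) * ((k : ℝ) + 1) ^ (Nat.clog 2 p) - 2 / (k : ℝ)) ≤ N →
        ordRamsey2Prop (multipartiteIntervals p n) G N) ∧
    (∀ H : SimpleGraph (Fin n), IsKDegenerate k n H →
      (∃ ic : Fin n → Fin p, Monotone ic ∧ ∀ a b : Fin n, H.Adj a b → ic a ≠ ic b) →
      ∀ N : ℕ,
        (n : ℝ) ^ ((1 + 2 / (k : ℝ)) * ((k : ℝ) + 1) ^ (Nat.clog 2 p) - 2 / (k : ℝ)) ≤ N →
          ordRamsey2Prop H H N) := by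
  refine ⟨fun N hN => ordRamsey2Prop_multipartiteIntervals_of_isKDegenerate hk hdeg hN,
    fun H hH ⟨ic, hic, hadj⟩ N hN => ?_⟩
  obtain ⟨e, he⟩ := exists_orderEmbedding_multipartiteIntervals hic hadj
  exact (ordRamsey2Prop_multipartiteIntervals_of_isKDegenerate hk hH hN).of_orderEmbedding e he

/-- for a `k`-degenerate ordered graph `G` on `n` vertices,
`OR(G, K_n(p)) ≤ n^{(1+2/k)(k+1)^{⌈log p⌉} − 2/k}` (here `G` plays the blue role,
`K_n(p)` the red one); in particular, every `k`-degenerate ordered graph `H` on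
`n` vertices with interval chromatic number `p` satisfies
`OR(H; 2) ≤ n^{(1+2/k)(k+1)^{⌈log p⌉} − 2/k}`. Logarithms are base 2. -/
theorem ordered_ramsey_degenerate_vs_multipartite (k p n : ℕ) (hk : 0 < k) (hp : 0 < p)
    (G : SimpleGraph (Fin n)) (hdeg : IsKDegenerate k n G) :
    (∀ N : ℕ,
      (n : ℝ) ^ ((1 + 2 / (k : ℝ)) * ((k : ℝ) + 1) ^ (Nat.clog 2 p) - 2 / (k : ℝ)) ≤ N →
        ordRamsey2Prop (multipartiteIntervals p n) G N) ∧
    (∀ H : SimpleGraph (Fin n), IsKDegenerate k n H →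
      (∃ ic : Fin n → Fin p, Monotone ic ∧ ∀ a b : Fin n, H.Adj a b → ic a ≠ ic b) →
      ∀ N : ℕ,
        (n : ℝ) ^ ((1 + 2 / (k : ℝ)) * ((k : ℝ) + 1) ^ (Nat.clog 2 p) - 2 / (k : ℝ)) ≤ N →
          ordRamsey2Prop H H N) :=
  ordered_ramsey_degenerate_vs_multipartite_general k p n hk G hdeg
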